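/- arXiv:2009.14622 — 3 statements merged into one kernel-verified Lean document; each statement's English description precedes it below -/
import Mathlib

section
/- For an integer n and natural number i, the expansion of G_{n,i}(z,w) = (z^{-n+1}/i!)(d/dw)^i(w^{n-1}/(z-w)) in the domain |w| > |z| (expanding 1/(z-w) = -Σ_{k≥0} z^k w^{-k-1}) equals -Σ_{j≥0} binom(n-2-j, i) w^{n-j-2-i} z^{-n+1+j}. -/
/-- Generalized binomial coefficient `binom(n, i)` for an integer `n`. -/
noncomputable def gchoose (n : ℤ) (i : ℕ) : ℂ :=
  (∏ k ∈ Finset.range i, ((n : ℂ) - k)) / (Nat.factorial i : ℂ)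

/-- The rational function `G_{n,i}(z,w) = (z^{-n+1}/i!) (d/dw)^i (w^{n-1}/(z-w))`. -/
noncomputable def Grat (n : ℤ) (i : ℕ) (z w : ℂ) : ℂ :=
  z ^ (-n + 1) / (Nat.factorial i : ℂ) * iteratedDeriv i (fun w' => w' ^ (n - 1) / (z - w')) w

/-!
For `‖z‖ < ‖w‖` the geometric series gives `w ^ (n - 1) / (z - w) = -∑ j, z ^ j * w ^ (n - 2 - j)`,
and the convergence is locally uniform in `w`. By Weierstrass' theorem such a series of
holomorphic functions may be differentiated termwise any number of times, and the `i`-th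
derivative of `w ^ (n - 2 - j)` is `i! * binom(n - 2 - j, i) * w ^ (n - 2 - j - i)`.
-/

open Filter Metric

theorem TendstoLocallyUniformlyOn.iteratedDeriv {E ι : Type*} [NormedAddCommGroup E]
    [NormedSpace ℂ E] [CompleteSpace E] {F : ι → ℂ → E} {f : ℂ → E} {φ : Filter ι} {U : Set ℂ}
    (hf : TendstoLocallyUniformlyOn F f φ U) (hF : ∀ᶠ n in φ, DifferentiableOn ℂ (F n) U)
    (hU : IsOpen U) (k : ℕ) :
    TendstoLocallyUniformlyOn (fun n => iteratedDeriv k (F n)) (iteratedDeriv k f) φ U := by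
  simp only [iteratedDeriv_eq_iterate]
  induction k generalizing F f with
  | zero => exact hf
  | succ k ih => exact ih (hf.deriv hF hU) (hF.mono fun n hn => hn.deriv hU)

theorem iteratedDeriv_sum_mul_zpow {𝕜 ι : Type*} [NontriviallyNormedField 𝕜] [CompleteSpace 𝕜]
    (N : Finset ι) (c : ι → 𝕜) (e : ι → ℤ) (k : ℕ) {y : 𝕜} (hy : y ≠ 0) :
    iteratedDeriv k (fun y => ∑ j ∈ N, c j * y ^ e j) y
      = ∑ j ∈ N, c j * (∏ l ∈ Finset.range k, ((e j : 𝕜) - l)) * y ^ (e j - k) := by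
  rw [iteratedDeriv_fun_sum (f := fun j y => c j * y ^ e j)
    fun j _ => (analyticAt_const.mul (analyticAt_id.zpow hy)).contDiffAt]
  refine Finset.sum_congr rfl fun j _ => ?_
  rw [iteratedDeriv_const_mul_field, iteratedDeriv_eq_iterate, iter_deriv_zpow, mul_assoc]

theorem hasSum_zpow_div_sub {𝕜 : Type*} [NormedField 𝕜] [CompleteSpace 𝕜] {z y : 𝕜}
    (h : ‖z‖ < ‖y‖) (m : ℤ) :
    HasSum (fun j : ℕ => -z ^ j * y ^ (m - j)) (y ^ (m + 1) / (z - y)) := by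
  have hy : y ≠ 0 := norm_pos_iff.1 ((norm_nonneg z).trans_lt h)
  have hq : ‖z / y‖ < 1 := by rwa [norm_div, div_lt_one (norm_pos_iff.2 hy)]
  have hgeom := (hasSum_geometric_of_norm_lt_one hq).mul_left (-y ^ m)
  have hterm : (fun j : ℕ => -y ^ m * (z / y) ^ j) = fun j : ℕ => -z ^ j * y ^ (m - j) := by
    ext j
    rw [zpow_sub₀ hy, zpow_natCast, div_pow]
    ring
  have hval : -y ^ m * (1 - z / y)⁻¹ = y ^ (m + 1) / (z - y) := by
    rw [zpow_add_one₀ hy, one_sub_div hy, inv_div, ← neg_sub y z, div_neg]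
    field_simp
  rwa [hterm, hval] at hgeom

theorem hasSumLocallyUniformlyOn_zpow_div_sub {𝕜 : Type*} [NormedField 𝕜] [ProperSpace 𝕜]
    (z : 𝕜) (m : ℤ) :
    HasSumLocallyUniformlyOn (fun (j : ℕ) y => -z ^ j * y ^ (m - j))
      (fun y => y ^ (m + 1) / (z - y)) {y | ‖z‖ < ‖y‖} := by
  refine hasSumLocallyUniformlyOn_of_of_forall_exists_nhds fun x (hx : ‖z‖ < ‖x‖) => ?_
  set r := (‖z‖ + ‖x‖) / 2
  have hzr : ‖z‖ < r := by simp only [r]; linarith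
  have hr : 0 < r := (norm_nonneg z).trans_lt hzr
  have hρ : 0 < ‖x‖ - r := by simp only [r]; linarith
  have hball : ∀ y ∈ closedBall x (‖x‖ - r), r ≤ ‖y‖ := fun y hy => by
    have := norm_sub_norm_le x y
    rw [mem_closedBall, dist_eq_norm, norm_sub_rev] at hy
    linarith
  obtain ⟨C, hC⟩ := (isCompact_closedBall x (‖x‖ - r)).exists_bound_of_continuousOn
    (f := fun y : 𝕜 => y ^ m) ((continuousOn_zpow₀ m).mono fun y hy =>
      norm_pos_iff.1 (hr.trans_le (hball y hy)))
  refine ⟨ball x (‖x‖ - r), mem_nhdsWithin_of_mem_nhds (ball_mem_nhds x hρ), ?_⟩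
  have hq : ‖z‖ / r < 1 := (div_lt_one hr).2 hzr
  refine (HasSumUniformlyOn.of_norm_le_summable
    ((summable_geometric_of_lt_one (by positivity) hq).mul_left C) fun j y hy => ?_).congr_right
    fun y hy => (hasSum_zpow_div_sub (hzr.trans_le (hball y (ball_subset_closedBall hy))) m).tsum_eq
  replace hy := ball_subset_closedBall hy
  have hy0 : y ≠ 0 := norm_pos_iff.1 (hr.trans_le (hball y hy))
  have hC0 : 0 ≤ C := (norm_nonneg _).trans (hC y hy)
  calc ‖-z ^ j * y ^ (m - j)‖ = ‖y ^ m‖ * (‖z‖ ^ j / ‖y‖ ^ j) := by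
        rw [zpow_sub₀ hy0, zpow_natCast, norm_mul, norm_neg, norm_div, norm_pow, norm_pow]
        ring
    _ ≤ C * (‖z‖ / r) ^ j := by
        rw [div_pow]
        gcongr
        exacts [hC y hy, hball y hy]

theorem stmt2_general (n : ℤ) (i : ℕ) (z w : ℂ) (hz : z ≠ 0) (h : ‖z‖ < ‖w‖) :
    HasSum (fun j : ℕ =>
      -(gchoose (n - 2 - (j : ℤ)) i) * w ^ (n - (j : ℤ) - 2 - (i : ℤ)) * z ^ (-n + 1 + (j : ℤ)))
      (Grat n i z w) := by
  set U : Set ℂ := {y | ‖z‖ < ‖y‖}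
  have hU : IsOpen U := isOpen_lt continuous_const continuous_norm
  have hw : w ≠ 0 := norm_pos_iff.1 ((norm_nonneg z).trans_lt h)
  have hdiff (N : Finset ℕ) : DifferentiableOn ℂ (fun y => ∑ j ∈ N, -z ^ j * y ^ (n - 2 - j)) U :=
    DifferentiableOn.fun_sum fun j _ =>
      (differentiableOn_zpow _ _ (Or.inl (by simp [U]))).const_mul _
  have hlim := ((hasSumLocallyUniformlyOn_zpow_div_sub z (n - 2)).iteratedDeriv
    (Eventually.of_forall hdiff) hU i).tendsto_at h
  rw [show n - 2 + 1 = n - 1 by ring] at hlim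
  have hsum : HasSum
      (fun j : ℕ =>
        -z ^ j * (∏ l ∈ Finset.range i, (((n - 2 - j : ℤ) : ℂ) - l)) * w ^ (n - 2 - j - i))
      (iteratedDeriv i (fun y => y ^ (n - 1) / (z - y)) w) :=
    hlim.congr fun N => iteratedDeriv_sum_mul_zpow N (fun j => -z ^ j) (fun j => n - 2 - j) i hw
  refine (hsum.mul_left (z ^ (-n + 1) / (Nat.factorial i : ℂ))).congr_fun fun j => ?_
  rw [gchoose.eq_1, zpow_add₀ hz, zpow_natCast, show n - j - 2 - i = n - 2 - j - i by ring]
  ring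

/-- In the domain `|w| > |z| > 0`, the expansion of `G_{n,i}(z,w)` (expanding
`1/(z-w) = -Σ_{k≥0} z^k w^{-k-1}`) is `-Σ_{j≥0} binom(n-2-j, i) w^{n-j-2-i} z^{-n+1+j}`. -/
theorem stmt2 (n : ℤ) (i : ℕ) (z w : ℂ) (hz : z ≠ 0) (hw : w ≠ 0) (h : ‖z‖ < ‖w‖) :
    HasSum (fun j : ℕ =>
      -(gchoose (n - 2 - (j : ℤ)) i) * w ^ (n - (j : ℤ) - 2 - (i : ℤ)) * z ^ (-n + 1 + (j : ℤ)))
      (Grat n i z w) :=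
  stmt2_general n i z w hz h
end

section
/- Let V be a vertex operator algebra, M a V-module, a₁, a₂ homogeneous elements of V of weights wt a₁ and wt a₂, v ∈ M, and n a nonnegative integer. Then Σ_{i,j≥0} binom(wt a₁ - 1, j) binom(wt a₂ + n, i) (a₁(j)a₂(i)v - a₂(i)a₁(j)v) = Σ_{i,j≥0} binom(wt a₁ - 1, j) binom(wt a₁ + wt a₂ - j - 1 + n, i) (a₁(j)a₂)(i)v. -/
open Finset

private lemma descPoch_eval (r : ℂ) (i : ℕ) :
    (descPochhammer ℂ i).eval r = ∏ k ∈ Finset.range i, (r - k) := by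
  induction i with
  | zero => simp
  | succ i ih => rw [descPochhammer_succ_eval, ih, Finset.prod_range_succ]

private lemma gchoose_eq (n : ℤ) (i : ℕ) : gchoose n i = Ring.choose ((n : ℂ)) i := by
  have h1 : (descPochhammer ℤ i).smeval ((n:ℂ)) = (descPochhammer ℂ i).eval ((n:ℂ)) := by
    rw [← Polynomial.aeval_eq_smeval, Polynomial.aeval_def, Polynomial.eval₂_eq_eval_map,
      descPochhammer_map]
  have h2 := Ring.descPochhammer_eq_factorial_smul_choose ((n:ℂ)) i
  rw [h1, descPoch_eval] at h2
  have hf : (Nat.factorial i : ℂ) ≠ 0 := by exact_mod_cast Nat.factorial_ne_zero i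
  rw [gchoose, h2, nsmul_eq_mul]
  field_simp

private lemma gchoose_natCast (j k : ℕ) : gchoose (j : ℤ) k = (j.choose k : ℂ) := by
  rw [gchoose_eq]
  push_cast
  exact Ring.choose_natCast (R := ℂ) j k

private lemma gchoose_zero_right (m : ℤ) : gchoose m 0 = 1 := by simp [gchoose]

private lemma gchoose_zero_left {i : ℕ} (hi : i ≠ 0) : gchoose 0 i = 0 := by
  have h0 : ((0:ℕ) : ℤ) = 0 := rfl
  rw [← h0, gchoose_natCast, Nat.choose_eq_zero_of_lt (Nat.pos_of_ne_zero hi)]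
  simp

private lemma finsum_eq_sum_range {M : Type*} [AddCommMonoid M] (f : ℕ → M) (C : ℕ)
    (h : ∀ k, C ≤ k → f k = 0) : ∑ᶠ k, f k = ∑ k ∈ Finset.range C, f k := by
  refine finsum_eq_finset_sum_of_support_subset f ?_
  intro x hx
  simp only [Function.mem_support] at hx
  simp only [coe_range, Set.mem_Iio]
  by_contra hc
  exact hx (h x (le_of_not_gt hc))

private lemma vandermonde (r s : ℂ) (m : ℕ) :
    ∑ t ∈ range (m+1), Ring.choose r t * Ring.choose s (m - t) = Ring.choose (r+s) m := by
  rw [Ring.add_choose_eq m (Commute.all r s),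
    Finset.Nat.sum_antidiagonal_eq_sum_range_succ_mk (fun ij => Ring.choose r ij.1 * Ring.choose s ij.2)]

private lemma scalar_id (r s2 : ℂ) (k m : ℕ) :
    ∑ t ∈ Finset.range (m+1), Ring.choose r (k+t) * Ring.choose s2 (m-t) * ((k+t).choose k : ℂ)
      = Ring.choose r k * Ring.choose (r - k + s2) m := by
  have key : ∀ t : ℕ, Ring.choose r (k+t) * ((k+t).choose k : ℂ)
      = Ring.choose r k * Ring.choose (r - k) t := by
    intro t
    have h := Ring.choose_smul_choose r (n := k+t) (k := k) (Nat.le_add_right k t)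
    rw [nsmul_eq_mul, Nat.add_sub_cancel_left] at h
    rw [mul_comm]; exact h
  calc ∑ t ∈ Finset.range (m+1), Ring.choose r (k+t) * Ring.choose s2 (m-t) * ((k+t).choose k : ℂ)
      = ∑ t ∈ Finset.range (m+1), Ring.choose r k * (Ring.choose (r-k) t * Ring.choose s2 (m-t)) := by
        refine Finset.sum_congr rfl fun t _ => ?_
        rw [mul_right_comm, key t, mul_assoc]
    _ = Ring.choose r k * Ring.choose (r - k + s2) m := by rw [← Finset.mul_sum, vandermonde]

private lemma sum_range_shift {γ : Type*} [AddCommMonoid γ] (h : ℕ → γ) (k B2 : ℕ) (hk : k ≤ B2)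
    (h0 : ∀ j < k, h j = 0) :
    ∑ j ∈ Finset.range B2, h j = ∑ t ∈ Finset.range (B2 - k), h (k + t) := by
  rw [Finset.range_eq_Ico, ← Finset.sum_Ico_consecutive h (Nat.zero_le k) hk,
    Finset.sum_Ico_eq_sum_range, Finset.sum_Ico_eq_sum_range]
  have hz : ∀ i ∈ Finset.range (k - 0), h (0 + i) = 0 := by
    intro i hi
    simp only [Finset.mem_range, Nat.sub_zero] at hi
    rw [zero_add]; exact h0 i hi
  rw [Finset.sum_eq_zero hz, zero_add]

private lemma diag_sum {γ : Type*} [AddCommMonoid γ] (B : ℕ) (A : ℕ → ℕ → γ)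
    (h : ∀ t i, B ≤ t + i → A t i = 0) :
    ∑ t ∈ range B, ∑ i ∈ range B, A t i = ∑ s ∈ range B, ∑ t ∈ range (s+1), A t (s-t) := by
  classical
  rw [← Finset.sum_product' (range B) (range B) A,
    Finset.sum_sigma' (range B) (fun s => range (s+1)) (fun s t => A t (s - t))]
  rw [← Finset.sum_filter_of_ne (s := (range B) ×ˢ (range B)) (f := fun p => A p.1 p.2)
    (p := fun p => p.1 + p.2 < B) (by
      intro x hx hfx
      by_contra hc
      exact hfx (h x.1 x.2 (le_of_not_gt hc)))]
  refine Finset.sum_nbij' (fun p => ⟨p.1 + p.2, p.1⟩) (fun q => (q.2, q.1 - q.2)) ?_ ?_ ?_ ?_ ?_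
  · rintro ⟨t, i⟩ hp
    simp only [mem_filter, mem_product, mem_range] at hp
    simp only [Finset.mem_sigma, mem_range]
    exact ⟨hp.2, Nat.lt_succ_of_le (Nat.le_add_right t i)⟩
  · rintro ⟨s, t⟩ hq
    simp only [Finset.mem_sigma, mem_range, Nat.lt_succ_iff] at hq
    simp only [mem_filter, mem_product, mem_range]
    refine ⟨⟨lt_of_le_of_lt hq.2 hq.1, lt_of_le_of_lt (Nat.sub_le s t) hq.1⟩, ?_⟩
    rw [Nat.add_sub_cancel' hq.2]
    exact hq.1
  · rintro ⟨t, i⟩ _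
    simp [Nat.add_sub_cancel_left]
  · rintro ⟨s, t⟩ hq
    simp only [Finset.mem_sigma, mem_range, Nat.lt_succ_iff] at hq
    simp [Nat.add_sub_cancel' hq.2]
  · rintro ⟨t, i⟩ _
    simp [Nat.add_sub_cancel_left]

/-- Lemma 2.6 of the paper.  `V` is (the underlying space of) a vertex operator algebra with
modes `modeV a m : V → V` (so `modeV a m b = a(m)b`), `M` is a `V`-module with module modes
`modeM a m : M → M`.  The mode actions are truncated and satisfy the Borcherds (Jacobi)
identity in component form.  If `a₁, a₂` are homogeneous of weights `w₁, w₂` and `v ∈ M`,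
`n ∈ ℤ_{≥0}`, then
`Σ_{i,j≥0} binom(w₁-1,j) binom(w₂+n,i) (a₁(j)a₂(i)v - a₂(i)a₁(j)v)
  = Σ_{i,j≥0} binom(w₁-1,j) binom(w₁+w₂-j-1+n,i) (a₁(j)a₂)(i)v`. -/
theorem stmt3 {V M : Type*} [AddCommGroup V] [Module ℂ V] [AddCommGroup M] [Module ℂ M]
    (modeV : V → ℤ → V → V) (modeM : V → ℤ → M → M)
    (htruncV : ∀ (a b : V), ∃ N : ℤ, ∀ m : ℤ, N ≤ m → modeV a m b = 0)
    (htruncM : ∀ (a : V) (x : M), ∃ N : ℤ, ∀ m : ℤ, N ≤ m → modeM a m x = 0)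
    (hborcherds : ∀ (a b : V) (x : M) (l m n : ℤ),
      ∑ᶠ i : ℕ, gchoose m i • modeM (modeV a (l + i) b) (m + n - i) x
        = ∑ᶠ i : ℕ, ((-1 : ℂ) ^ i * gchoose l i) • modeM a (m + l - i) (modeM b (n + i) x)
          - ∑ᶠ i : ℕ, ((-1 : ℂ) ^ (l + (i : ℤ)) * gchoose l i) •
              modeM b (n + l - i) (modeM a (m + i) x))
    -- `a₁, a₂` homogeneous of weights `w₁, w₂`
    (a₁ a₂ : V) (w₁ w₂ : ℤ) (v : M) (n : ℕ) :
    ∑ᶠ i : ℕ, ∑ᶠ j : ℕ, (gchoose (w₁ - 1) j * gchoose (w₂ + n) i) •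
        (modeM a₁ j (modeM a₂ i v) - modeM a₂ i (modeM a₁ j v))
      = ∑ᶠ i : ℕ, ∑ᶠ j : ℕ, (gchoose (w₁ - 1) j * gchoose (w₁ + w₂ - j - 1 + n) i) •
          modeM (modeV a₁ j a₂) i v := by
  classical
  -- Step 1: the commutator formula (Borcherds identity with l = 0)
  have hC : ∀ (a b : V) (x : M) (m nn : ℤ),
      ∑ᶠ k : ℕ, gchoose m k • modeM (modeV a (k : ℤ) b) (m + nn - k) x
        = modeM a m (modeM b nn x) - modeM b nn (modeM a m x) := by
    intro a b x m nn
    have h := hborcherds a b x 0 m nn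
    simp only [zero_add, add_zero] at h
    have e1 : ∑ᶠ i : ℕ, ((-1 : ℂ) ^ i * gchoose 0 i) • modeM a (m - i) (modeM b (nn + i) x)
        = modeM a m (modeM b nn x) := by
      rw [finsum_eq_single _ 0]
      · simp [gchoose_zero_right]
      · intro k hk
        rw [gchoose_zero_left hk, mul_zero, zero_smul]
    have e2 : ∑ᶠ i : ℕ, ((-1 : ℂ) ^ ((i : ℕ) : ℤ) * gchoose 0 i) •
        modeM b (nn - i) (modeM a (m + i) x) = modeM b nn (modeM a m x) := by
      rw [finsum_eq_single _ 0]
      · simp [gchoose_zero_right]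
      · intro k hk
        rw [gchoose_zero_left hk, mul_zero, zero_smul]
    rw [e1, e2] at h
    exact h
  -- Step 2: modeM a t 0 = 0 for t ≥ 0
  have hZ : ∀ (a : V) (t : ℤ), 0 ≤ t → modeM a t (0 : M) = 0 := by
    intro a t ht
    lift t to ℕ using ht with t
    obtain ⟨Na, hNa⟩ := htruncM a (0 : M)
    obtain ⟨Nb, hNb⟩ := htruncM a (modeM a (t : ℤ) 0)
    choose NF hNF using fun k : ℕ => htruncM (modeV a (k : ℤ) a) (0 : M)
    set nn : ℤ := max (max Na Nb) (((Finset.range (t+1)).sup fun k => (NF k + k).toNat : ℕ) : ℤ)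
      with hnn
    have hnnNa : Na ≤ nn := le_max_of_le_left (le_max_left _ _)
    have hnnNb : Nb ≤ nn := le_max_of_le_left (le_max_right _ _)
    have h := hC a a 0 (t : ℤ) nn
    have hlem : ∀ k : ℕ, gchoose (t : ℤ) k • modeM (modeV a (k : ℤ) a) ((t : ℤ) + nn - k) (0:M) = 0 := by
      intro k
      by_cases hk : k ≤ t
      · have h1 : ((NF k + k).toNat : ℤ) ≤ nn := by
          refine le_trans ?_ (le_max_right _ _)
          exact_mod_cast Nat.cast_le.mpr
            (Finset.le_sup (f := fun k => (NF k + k).toNat) (Finset.mem_range.mpr (Nat.lt_succ_of_le hk)))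
        have h2 := Int.self_le_toNat (NF k + k)
        have hb : NF k ≤ (t : ℤ) + nn - k := by
          have ht0 : (0:ℤ) ≤ (t:ℤ) := Int.natCast_nonneg t
          omega
        rw [hNF k _ hb, smul_zero]
      · rw [gchoose_natCast, Nat.choose_eq_zero_of_lt (lt_of_not_ge hk)]
        simp
    rw [finsum_eq_zero_of_forall_eq_zero hlem] at h
    rw [hNa nn hnnNa, hNb nn hnnNb] at h
    simpa using h.symm
  -- Step 3: modeM 0 t x = 0 for t ≥ 0
  have hZ0 : ∀ (x : M) (t : ℤ), 0 ≤ t → modeM (0 : V) t x = 0 := by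
    intro x
    obtain ⟨KV0, hKV0⟩ := htruncV (0 : V) (0 : V)
    set L : ℕ := KV0.toNat with hLdef
    have hLK : ∀ i : ℕ, modeV (0 : V) ((L : ℤ) + i) (0 : V) = 0 := by
      intro i
      apply hKV0
      have := Int.self_le_toNat KV0
      have h0 : (0:ℤ) ≤ (i:ℤ) := Int.natCast_nonneg i
      omega
    obtain ⟨N6, hN6⟩ := htruncM (0 : V) x
    have key : ∀ nnn : ℕ, ∃ mm : ℕ,
        ∑ k ∈ Finset.range (mm+1), gchoose (mm : ℤ) k • modeM (0:V) ((mm:ℤ) + nnn - k) x = 0 := by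
      intro nnn
      choose NY hNY using fun i : ℕ => htruncM (0 : V) (modeM (0 : V) ((nnn : ℤ) + i) x)
      set mm : ℕ := max ((Finset.range (L+1)).sup fun i => (NY i).toNat) (N6.toNat) with hmm
      refine ⟨mm, ?_⟩
      have h := hborcherds 0 0 x (L : ℤ) (mm : ℤ) (nnn : ℤ)
      have hLrw : ∀ i : ℕ, gchoose (mm:ℤ) i • modeM (modeV (0:V) ((L:ℤ) + i) 0) ((mm:ℤ) + nnn - i) x
          = gchoose (mm:ℤ) i • modeM (0:V) ((mm:ℤ) + nnn - i) x := by
        intro i; rw [hLK i]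
      rw [finsum_congr hLrw] at h
      rw [finsum_eq_sum_range _ (mm+1) (by
        intro k hk
        rw [gchoose_natCast, Nat.choose_eq_zero_of_lt (by omega)]
        simp)] at h
      have hR1 : ∑ᶠ i : ℕ, ((-1:ℂ) ^ i * gchoose (L:ℤ) i) •
          modeM (0:V) ((mm:ℤ) + L - i) (modeM (0:V) ((nnn:ℤ) + i) x) = 0 := by
        refine finsum_eq_zero_of_forall_eq_zero fun i => ?_
        by_cases hi : i ≤ L
        · have c1 : (NY i).toNat ≤ mm :=
            le_trans (Finset.le_sup (f := fun i => (NY i).toNat)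
              (Finset.mem_range.mpr (Nat.lt_succ_of_le hi))) (le_max_left _ _)
          have h1 := Int.self_le_toNat (NY i)
          have h2 : ((NY i).toNat : ℤ) ≤ (mm : ℤ) := by exact_mod_cast c1
          have h3 : (i : ℤ) ≤ (L : ℤ) := by exact_mod_cast hi
          rw [hNY i _ (by omega), smul_zero]
        · rw [gchoose_natCast, Nat.choose_eq_zero_of_lt (by omega)]
          simp
      have hR2 : ∑ᶠ i : ℕ, ((-1:ℂ) ^ ((L:ℤ) + (i:ℤ)) * gchoose (L:ℤ) i) •
          modeM (0:V) ((nnn:ℤ) + L - i) (modeM (0:V) ((mm:ℤ) + i) x) = 0 := by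
        refine finsum_eq_zero_of_forall_eq_zero fun i => ?_
        by_cases hi : i ≤ L
        · have h1 := Int.self_le_toNat N6
          have h2 : (N6.toNat : ℤ) ≤ (mm : ℤ) := by exact_mod_cast (le_max_right _ _ : N6.toNat ≤ mm)
          have h3 : (i : ℤ) ≤ (L : ℤ) := by exact_mod_cast hi
          have h4 : (0:ℤ) ≤ (i:ℤ) := Int.natCast_nonneg i
          have h5 : (0:ℤ) ≤ (nnn:ℤ) := Int.natCast_nonneg nnn
          rw [hN6 _ (by omega), hZ 0 _ (by omega), smul_zero]
        · rw [gchoose_natCast, Nat.choose_eq_zero_of_lt (by omega)]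
          simp
      rw [hR1, hR2] at h
      simpa using h
    have main : ∀ d : ℕ, ∀ s : ℕ, N6.toNat ≤ s + d → modeM (0:V) (s : ℤ) x = 0 := by
      intro d
      induction d with
      | zero =>
        intro s hs
        rw [Nat.add_zero] at hs
        exact hN6 _ (Int.toNat_le.mp hs)
      | succ d ih =>
        intro s hs
        by_cases h' : N6.toNat ≤ s + d
        · exact ih s h'
        · obtain ⟨mm, hsum⟩ := key s
          rw [Finset.sum_range_succ] at hsum
          have hz : ∀ k ∈ Finset.range mm, gchoose (mm:ℤ) k • modeM (0:V) ((mm:ℤ) + s - k) x = 0 := by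
            intro k hk
            rw [Finset.mem_range] at hk
            have hidx : ((mm:ℤ) + s - k) = ((mm - k + s : ℕ) : ℤ) := by omega
            rw [hidx, ih (mm - k + s) (by omega), smul_zero]
          rw [Finset.sum_eq_zero hz, zero_add] at hsum
          have hone : gchoose (mm:ℤ) mm = 1 := by
            rw [gchoose_natCast, Nat.choose_self]; norm_num
          rw [hone, one_smul] at hsum
          have hidx2 : (mm:ℤ) + s - mm = (s:ℤ) := by ring
          rwa [hidx2] at hsum
    intro t ht
    lift t to ℕ using ht with t
    exact main N6.toNat t (Nat.le_add_left _ _)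
  -- Step 4: bounds
  obtain ⟨KV, hKV⟩ := htruncV a₁ a₂
  set K : ℕ := KV.toNat with hKdef
  have hK : ∀ k : ℕ, K ≤ k → modeV a₁ (k:ℤ) a₂ = 0 := by
    intro k hk
    apply hKV
    have h1 : KV ≤ (K:ℤ) := Int.self_le_toNat KV
    have h2 : (K:ℤ) ≤ (k:ℤ) := by exact_mod_cast hk
    omega
  obtain ⟨N1', hN1'⟩ := htruncM a₁ v
  set N1 : ℕ := N1'.toNat with hN1def
  have hN1 : ∀ j : ℕ, N1 ≤ j → modeM a₁ (j:ℤ) v = 0 := fun j hj => hN1' _ (Int.toNat_le.mp hj)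
  obtain ⟨N2', hN2'⟩ := htruncM a₂ v
  set N2 : ℕ := N2'.toNat with hN2def
  have hN2 : ∀ i : ℕ, N2 ≤ i → modeM a₂ (i:ℤ) v = 0 := fun i hi => hN2' _ (Int.toNat_le.mp hi)
  choose N3f hN3f using fun j : ℕ => htruncM a₂ (modeM a₁ (j:ℤ) v)
  set N3 : ℕ := (Finset.range N1).sup fun j => (N3f j).toNat with hN3def
  have hN3 : ∀ i j : ℕ, j < N1 → N3 ≤ i → modeM a₂ (i:ℤ) (modeM a₁ (j:ℤ) v) = 0 := by
    intro i j hj hi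
    refine hN3f j _ ?_
    have h1 : (N3f j).toNat ≤ N3 := Finset.le_sup (f := fun j => (N3f j).toNat) (Finset.mem_range.mpr hj)
    exact le_trans (Int.self_le_toNat _) (by exact_mod_cast le_trans h1 hi)
  choose N4f hN4f using fun i : ℕ => htruncM a₁ (modeM a₂ (i:ℤ) v)
  set N4 : ℕ := (Finset.range N2).sup fun i => (N4f i).toNat with hN4def
  have hN4 : ∀ j i : ℕ, i < N2 → N4 ≤ j → modeM a₁ (j:ℤ) (modeM a₂ (i:ℤ) v) = 0 := by
    intro j i hi hj
    refine hN4f i _ ?_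
    have h1 : (N4f i).toNat ≤ N4 := Finset.le_sup (f := fun i => (N4f i).toNat) (Finset.mem_range.mpr hi)
    exact le_trans (Int.self_le_toNat _) (by exact_mod_cast le_trans h1 hj)
  choose NFf hNFf using fun k : ℕ => htruncM (modeV a₁ (k:ℤ) a₂) v
  set BF : ℕ := (Finset.range K).sup fun k => (NFf k).toNat with hBFdef
  have hBF : ∀ k m : ℕ, BF ≤ m → modeM (modeV a₁ (k:ℤ) a₂) (m:ℤ) v = 0 := by
    intro k m hm
    by_cases hk : k < K
    · refine hNFf k _ ?_
      have h1 : (NFf k).toNat ≤ BF := Finset.le_sup (f := fun k => (NFf k).toNat) (Finset.mem_range.mpr hk)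
      exact le_trans (Int.self_le_toNat _) (by exact_mod_cast le_trans h1 hm)
    · rw [hK k (le_of_not_gt hk)]
      exact hZ0 v m (Int.natCast_nonneg m)
  set B : ℕ := K + N1 + N2 + N3 + N4 + BF + 1 with hBdef
  -- Step 5: pointwise vanishing
  have hfv : ∀ i j : ℕ, (N2 + N3 ≤ i ∨ N1 + N4 ≤ j) →
      (gchoose (w₁ - 1) j * gchoose (w₂ + n) i) •
        (modeM a₁ (j:ℤ) (modeM a₂ (i:ℤ) v) - modeM a₂ (i:ℤ) (modeM a₁ (j:ℤ) v)) = 0 := by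
    intro i j h
    have hX : modeM a₁ (j:ℤ) (modeM a₂ (i:ℤ) v) = 0 := by
      rcases h with h | h
      · rw [hN2 i (by omega)]
        exact hZ a₁ (j:ℤ) (Int.natCast_nonneg j)
      · by_cases hi : i < N2
        · exact hN4 j i hi (by omega)
        · rw [hN2 i (le_of_not_gt hi)]
          exact hZ a₁ (j:ℤ) (Int.natCast_nonneg j)
    have hY : modeM a₂ (i:ℤ) (modeM a₁ (j:ℤ) v) = 0 := by
      rcases h with h | h
      · by_cases hj : j < N1
        · exact hN3 i j hj (by omega)
        · rw [hN1 j (le_of_not_gt hj)]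
          exact hZ a₂ (i:ℤ) (Int.natCast_nonneg i)
      · rw [hN1 j (by omega)]
        exact hZ a₂ (i:ℤ) (Int.natCast_nonneg i)
    rw [hX, hY]
    simp
  have hgv : ∀ i j : ℕ, (BF ≤ i ∨ K ≤ j) →
      (gchoose (w₁ - 1) j * gchoose (w₁ + w₂ - j - 1 + n) i) • modeM (modeV a₁ (j:ℤ) a₂) (i:ℤ) v = 0 := by
    intro i j h
    rcases h with h | h
    · rw [hBF j i h, smul_zero]
    · rw [hK j h, hZ0 v (i:ℤ) (Int.natCast_nonneg i), smul_zero]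
  -- Step 6: convert both sides to finite sums
  have hL : (∑ᶠ i : ℕ, ∑ᶠ j : ℕ, (gchoose (w₁ - 1) j * gchoose (w₂ + n) i) •
        (modeM a₁ j (modeM a₂ i v) - modeM a₂ i (modeM a₁ j v)))
      = ∑ i ∈ Finset.range B, ∑ j ∈ Finset.range (2*B), (gchoose (w₁ - 1) j * gchoose (w₂ + n) i) •
        (modeM a₁ j (modeM a₂ i v) - modeM a₂ i (modeM a₁ j v)) := by
    have hinner : ∀ i : ℕ, (∑ᶠ j : ℕ, (gchoose (w₁ - 1) j * gchoose (w₂ + n) i) •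
        (modeM a₁ j (modeM a₂ i v) - modeM a₂ i (modeM a₁ j v)))
        = ∑ j ∈ Finset.range (2*B), (gchoose (w₁ - 1) j * gchoose (w₂ + n) i) •
        (modeM a₁ j (modeM a₂ i v) - modeM a₂ i (modeM a₁ j v)) := by
      intro i
      exact finsum_eq_sum_range _ (2*B) (fun j hj => hfv i j (Or.inr (by omega)))
    rw [finsum_congr hinner]
    exact finsum_eq_sum_range _ B (fun i hi => Finset.sum_eq_zero fun j _ => hfv i j (Or.inl (by omega)))
  have hR : (∑ᶠ i : ℕ, ∑ᶠ j : ℕ, (gchoose (w₁ - 1) j * gchoose (w₁ + w₂ - j - 1 + n) i) •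
        modeM (modeV a₁ j a₂) i v)
      = ∑ i ∈ Finset.range B, ∑ j ∈ Finset.range (2*B),
        (gchoose (w₁ - 1) j * gchoose (w₁ + w₂ - j - 1 + n) i) • modeM (modeV a₁ j a₂) i v := by
    have hinner : ∀ i : ℕ, (∑ᶠ j : ℕ, (gchoose (w₁ - 1) j * gchoose (w₁ + w₂ - j - 1 + n) i) •
        modeM (modeV a₁ j a₂) i v)
        = ∑ j ∈ Finset.range (2*B), (gchoose (w₁ - 1) j * gchoose (w₁ + w₂ - j - 1 + n) i) •
        modeM (modeV a₁ j a₂) i v := by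
      intro i
      exact finsum_eq_sum_range _ (2*B) (fun j hj => hgv i j (Or.inr (by omega)))
    rw [finsum_congr hinner]
    exact finsum_eq_sum_range _ B (fun i hi => Finset.sum_eq_zero fun j _ => hgv i j (Or.inl (by omega)))
  rw [hL, hR]
  conv_rhs => rw [Finset.sum_comm]
  -- Step 7: rewrite the commutator via hC
  have hcomm : ∀ i j : ℕ, j < 2*B →
      (gchoose (w₁ - 1) j * gchoose (w₂ + n) i) •
        (modeM a₁ (j:ℤ) (modeM a₂ (i:ℤ) v) - modeM a₂ (i:ℤ) (modeM a₁ (j:ℤ) v))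
      = ∑ k ∈ Finset.range (2*B), (gchoose (w₁ - 1) j * gchoose (w₂ + n) i * (j.choose k : ℂ)) •
          modeM (modeV a₁ (k:ℤ) a₂) ((j:ℤ) + i - k) v := by
    intro i j hj
    rw [← hC a₁ a₂ v (j:ℤ) (i:ℤ)]
    rw [finsum_eq_sum_range _ (2*B) (fun k hk => by
      rw [gchoose_natCast, Nat.choose_eq_zero_of_lt (by omega)]
      simp)]
    rw [Finset.smul_sum]
    refine Finset.sum_congr rfl fun k _ => ?_
    rw [smul_smul, gchoose_natCast]
  refine Eq.trans (Finset.sum_congr rfl fun i _ => Finset.sum_congr rfl fun j hj =>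
    hcomm i j (Finset.mem_range.mp hj)) ?_
  refine Eq.trans (Finset.sum_congr rfl fun i _ => Finset.sum_comm) ?_
  refine Eq.trans Finset.sum_comm ?_
  refine Finset.sum_congr rfl fun k hk => ?_
  rw [Finset.mem_range] at hk
  by_cases hkB : B ≤ k
  · -- degenerate case: both sides vanish
    have hFF0 : ∀ m : ℤ, 0 ≤ m → modeM (modeV a₁ (k:ℤ) a₂) m v = 0 := by
      intro m hm
      rw [hK k (by omega)]
      exact hZ0 v m hm
    rw [Finset.sum_eq_zero (fun i _ => Finset.sum_eq_zero fun j _ => ?_),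
      Finset.sum_eq_zero (fun i _ => ?_)]
    · rw [hFF0 (i:ℤ) (Int.natCast_nonneg i), smul_zero]
    · rcases lt_or_ge j k with hjk | hjk
      · rw [Nat.choose_eq_zero_of_lt hjk]
        simp
      · have hjk' : (k:ℤ) ≤ (j:ℤ) := by exact_mod_cast hjk
        have h0 : (0:ℤ) ≤ (j:ℤ) + i - k := by
          have := Int.natCast_nonneg i
          omega
        rw [hFF0 _ h0, smul_zero]
  · -- main case : k < B
    rw [Finset.sum_comm]
    rw [sum_range_shift _ k (2*B) (by omega) (fun j hjk => Finset.sum_eq_zero fun i _ => by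
      rw [Nat.choose_eq_zero_of_lt hjk]
      simp)]
    have hidx : ∀ t i : ℕ, ((k+t:ℕ):ℤ) + (i:ℤ) - (k:ℤ) = ((t+i:ℕ):ℤ) := by
      intro t i; push_cast; ring
    simp only [hidx]
    refine Eq.trans (Finset.sum_subset (Finset.range_subset_range.mpr (show B ≤ 2*B - k by omega))
      (fun t _ ht => Finset.sum_eq_zero fun i _ => by
        simp only [Finset.mem_range, not_lt] at ht
        rw [hBF k (t+i) (by omega), smul_zero])).symm ?_
    refine Eq.trans (diag_sum B (fun t i =>
      (gchoose (w₁ - 1) (k + t) * gchoose (w₂ + n) i * ((k + t).choose k : ℂ)) •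
        modeM (modeV a₁ (k:ℤ) a₂) ((t + i : ℕ) : ℤ) v)
      (fun t i hti => by beta_reduce; rw [hBF k (t+i) (by omega), smul_zero])) ?_
    refine Finset.sum_congr rfl fun s hs => ?_
    rw [Finset.mem_range] at hs
    have hsub2 : ∀ t ∈ Finset.range (s+1),
        (gchoose (w₁ - 1) (k + t) * gchoose (w₂ + n) (s - t) * ((k + t).choose k : ℂ)) •
          modeM (modeV a₁ (k:ℤ) a₂) ((t + (s - t) : ℕ) : ℤ) v
        = (gchoose (w₁ - 1) (k + t) * gchoose (w₂ + n) (s - t) * ((k + t).choose k : ℂ)) •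
          modeM (modeV a₁ (k:ℤ) a₂) ((s : ℕ) : ℤ) v := by
      intro t ht
      rw [Nat.add_sub_cancel' (Nat.lt_succ_iff.mp (Finset.mem_range.mp ht))]
    rw [Finset.sum_congr rfl hsub2, ← Finset.sum_smul]
    congr 1
    simp only [gchoose_eq]
    rw [scalar_id]
    congr 2
    push_cast
    ring
end

section
/- Let V be a VOA and M a V-module, and let A(M) = M/O(M) be the A(V)-bimodule with left and right actions a*v and v*a. Then for homogeneous a ∈ V and v ∈ M, a*v - v*a ≡ Res_z Y(a,z)v (1+z)^{wt a - 1} = Σ_{i≥0} binom(wt a - 1, i) a(i)v in A(M). -/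
lemma gchoose_zero (n : ℤ) : gchoose n 0 = 1 := by simp [gchoose]

/-- Pascal's identity for the generalized binomial coefficient. -/
lemma gchoose_pascal (n : ℤ) (j : ℕ) :
    gchoose n (j + 1) = gchoose (n - 1) (j + 1) + gchoose (n - 1) j := by
  unfold gchoose
  have h1 : ∏ k ∈ Finset.range (j + 1), ((n : ℂ) - k)
      = (∏ k ∈ Finset.range j, ((((n : ℤ) - 1 : ℤ) : ℂ) - k)) * (n : ℂ) := by
    rw [Finset.prod_range_succ']
    congr 1
    · apply Finset.prod_congr rfl
      intro k _
      push_cast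
      ring
    · simp
  have h2 : ∏ k ∈ Finset.range (j + 1), ((((n : ℤ) - 1 : ℤ) : ℂ) - k)
      = (∏ k ∈ Finset.range j, ((((n : ℤ) - 1 : ℤ) : ℂ) - k)) * ((((n : ℤ) - 1 : ℤ) : ℂ) - j) := by
    rw [Finset.prod_range_succ]
  rw [h1, h2]
  have hfac : ((Nat.factorial (j + 1) : ℂ)) = ((j : ℂ) + 1) * (Nat.factorial j : ℂ) := by
    rw [Nat.factorial_succ]
    push_cast
    ring
  rw [hfac]
  have hjf : (Nat.factorial j : ℂ) ≠ 0 := by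
    exact_mod_cast Nat.cast_ne_zero.mpr (Nat.factorial_ne_zero j)
  have hj1 : ((j : ℂ) + 1) ≠ 0 := Nat.cast_add_one_ne_zero j
  field_simp
  push_cast
  ring

/-- In the `A(V)`-bimodule `A(M) = M/O(M)`, for homogeneous `a ∈ V` and `v ∈ M`:
`a*v - v*a ≡ Res_z Y(a,z)v (1+z)^{wt a - 1} = Σ_{i≥0} binom(wt a - 1, i) a(i)v`.
Here `O(M)` is spanned by the elements `Res_z Y(b,z)u (1+z)^{wt b}/z² = Σ_i binom(wt b,i) b(i-2)u`,
`a*v = Res_z Y(a,z)v (1+z)^{wt a}/z = Σ_i binom(wt a,i) a(i-1)v`, and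
`v*a = Res_z Y(a,z)v (1+z)^{wt a - 1}/z = Σ_i binom(wt a - 1,i) a(i-1)v`. -/
theorem stmt15 {V M : Type*} [AddCommGroup V] [Module ℂ V] [AddCommGroup M] [Module ℂ M]
    (mode : V → ℤ → M → M) (wt : V → ℤ)
    (htrunc : ∀ (b : V) (x : M), ∃ N : ℤ, ∀ m : ℤ, N ≤ m → mode b m x = 0)
    (a : V) (v : M) :
    (∑ᶠ i : ℕ, gchoose (wt a) i • mode a ((i : ℤ) - 1) v)        -- a * v
      - (∑ᶠ i : ℕ, gchoose (wt a - 1) i • mode a ((i : ℤ) - 1) v) -- v * a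
      - (∑ᶠ i : ℕ, gchoose (wt a - 1) i • mode a (i : ℤ) v)       -- Res_z Y(a,z)v (1+z)^{wt a-1}
      ∈ Submodule.span ℂ {x : M | ∃ (b : V) (u : M),
          x = ∑ᶠ i : ℕ, gchoose (wt b) i • mode b ((i : ℤ) - 2) u} := by
  obtain ⟨N, hN⟩ := htrunc a v
  set K : ℕ := (max N 0).toNat + 1 with hK
  have hNK : N ≤ (K : ℤ) - 1 := by
    have := Int.self_le_toNat (max N 0)
    simp only [hK]
    push_cast
    omega
  have hKbig : ∀ i : ℕ, K ≤ i → mode a ((i : ℤ) - 1) v = 0 := by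
    intro i hi
    apply hN
    have : (K : ℤ) ≤ (i : ℤ) := by exact_mod_cast hi
    omega
  have hKbig' : ∀ i : ℕ, K ≤ i → mode a (i : ℤ) v = 0 := by
    intro i hi
    apply hN
    have : (K : ℤ) ≤ (i : ℤ) := by exact_mod_cast hi
    omega
  have e1 : (∑ᶠ i : ℕ, gchoose (wt a) i • mode a ((i : ℤ) - 1) v)
      = ∑ i ∈ Finset.range (K + 1), gchoose (wt a) i • mode a ((i : ℤ) - 1) v := by
    apply finsum_eq_sum_of_support_subset
    intro i hi
    simp only [Finset.coe_range, Set.mem_Iio]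
    by_contra h
    push_neg at h
    exact hi (by simp only [hKbig i (by omega), smul_zero])
  have e2 : (∑ᶠ i : ℕ, gchoose (wt a - 1) i • mode a ((i : ℤ) - 1) v)
      = ∑ i ∈ Finset.range (K + 1), gchoose (wt a - 1) i • mode a ((i : ℤ) - 1) v := by
    apply finsum_eq_sum_of_support_subset
    intro i hi
    simp only [Finset.coe_range, Set.mem_Iio]
    by_contra h
    push_neg at h
    exact hi (by simp only [hKbig i (by omega), smul_zero])
  have e3 : (∑ᶠ i : ℕ, gchoose (wt a - 1) i • mode a (i : ℤ) v)
      = ∑ i ∈ Finset.range (K + 1), gchoose (wt a - 1) i • mode a (i : ℤ) v := by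
    apply finsum_eq_sum_of_support_subset
    intro i hi
    simp only [Finset.coe_range, Set.mem_Iio]
    by_contra h
    push_neg at h
    exact hi (by simp only [hKbig' i (by omega), smul_zero])
  rw [e1, e2, e3]
  have key : (∑ i ∈ Finset.range (K + 1), gchoose (wt a) i • mode a ((i : ℤ) - 1) v)
      - (∑ i ∈ Finset.range (K + 1), gchoose (wt a - 1) i • mode a ((i : ℤ) - 1) v)
      - (∑ i ∈ Finset.range (K + 1), gchoose (wt a - 1) i • mode a (i : ℤ) v) = 0 := by
    have hd : (∑ i ∈ Finset.range (K + 1), gchoose (wt a) i • mode a ((i : ℤ) - 1) v)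
        - (∑ i ∈ Finset.range (K + 1), gchoose (wt a - 1) i • mode a ((i : ℤ) - 1) v)
        = ∑ i ∈ Finset.range (K + 1),
            (gchoose (wt a) i - gchoose (wt a - 1) i) • mode a ((i : ℤ) - 1) v := by
      rw [← Finset.sum_sub_distrib]
      exact Finset.sum_congr rfl fun i _ => (sub_smul _ _ _).symm
    rw [hd]
    rw [Finset.sum_range_succ' (fun i => (gchoose (wt a) i - gchoose (wt a - 1) i)
        • mode a ((i : ℤ) - 1) v) K]
    have hz : (gchoose (wt a) 0 - gchoose (wt a - 1) 0) • mode a ((0 : ℕ) - 1 : ℤ) v = 0 := by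
      rw [gchoose_zero, gchoose_zero, sub_self, zero_smul]
    rw [hz, add_zero]
    have hterm : ∀ j ∈ Finset.range K,
        (gchoose (wt a) (j + 1) - gchoose (wt a - 1) (j + 1)) • mode a (((j + 1 : ℕ) : ℤ) - 1) v
        = gchoose (wt a - 1) j • mode a (j : ℤ) v := by
      intro j _
      have hp := gchoose_pascal (wt a) j
      have : gchoose (wt a) (j + 1) - gchoose (wt a - 1) (j + 1) = gchoose (wt a - 1) j := by
        rw [hp]; ring
      rw [show (((j + 1 : ℕ) : ℤ) - 1) = (j : ℤ) by push_cast; ring, this]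
    have hsum1 : ∑ j ∈ Finset.range K,
        (gchoose (wt a) (j + 1) - gchoose (wt a - 1) (j + 1)) • mode a (((j + 1 : ℕ) : ℤ) - 1) v
        = ∑ j ∈ Finset.range K, gchoose (wt a - 1) j • mode a (j : ℤ) v := by
      apply Finset.sum_congr rfl
      intro j hj
      have := hterm j hj
      convert this using 2 <;> push_cast <;> ring
    rw [show (∑ i ∈ Finset.range K,
        (gchoose (wt a) (i + 1) - gchoose (wt a - 1) (i + 1)) • mode a (((i + 1 : ℕ) : ℤ) - 1) v)
        = ∑ j ∈ Finset.range K, gchoose (wt a - 1) j • mode a (j : ℤ) v from hsum1]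
    rw [Finset.sum_range_succ (fun i => gchoose (wt a - 1) i • mode a (i : ℤ) v) K]
    rw [hKbig' K le_rfl, smul_zero, add_zero, sub_self]
  rw [key]
  exact Submodule.zero_mem _
end
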